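/- arXiv:1408.3327 — 2 statements merged into one kernel-verified Lean document; each statement's English description precedes it below -/
import Mathlib

section
/- Let 0 < γ' < γ ≤ δ < δ' be real numbers and let a : ℤ → K satisfy ‖a n‖ · (δ')^n → 0 as n → +∞ and ‖a n‖ · (γ')^n → 0 as n → −∞ (overconvergent decay for the annulus γ ≤ |T| ≤ δ). Define b : ℤ → K by b n = a n / ((n : ℤ) : K) for n ≠ 0 and b 0 = 0. Then for all reals γ'', δ'' with γ' < γ'' < γ and δ < δ'' < δ' one has ‖b n‖ · (δ'')^n → 0 as n → +∞ and ‖b n‖ · (γ'')^n → 0 as n → −∞. (Two-sided formal integration preserves overconvergence on annuli; this is the key convergence claim, step (i), in the proof of the paper's Lemma 2.1.) -/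
open Filter Topology

/-!
On `ℚ` the norm of `K` is a bounded absolute value, so by Ostrowski it is trivial or a power of a
`p`-adic one; in both cases `‖n‖⁻¹ ≤ n ^ t` for some `t`. Dividing the `n`-th coefficient by `n`
therefore costs only a polynomial factor, which the geometric gain `(s / r) ^ |n|` from shrinking
the radius absorbs.
-/

section NormNatCast

variable (K : Type*) [NormedField K] [IsUltrametricDist K] [CharZero K]

theorem exists_norm_natCast_inv_le_rpow :
    ∃ t : ℝ, ∀ n : ℕ, n ≠ 0 → ‖(n : K)‖⁻¹ ≤ (n : ℝ) ^ t := by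
  set f : AbsoluteValue ℚ ℝ := (NormedField.toAbsoluteValue K).comp (Rat.castHom K).injective
  have hf (n : ℕ) : f n = ‖(n : K)‖ := by
    show ‖((n : ℚ) : K)‖ = _
    rw [Rat.cast_natCast]
  have bdd (n : ℕ) : f n ≤ 1 := hf n ▸ IsUltrametricDist.norm_natCast_le_one K n
  by_cases hnt : f.IsNontrivial
  · obtain ⟨p, ⟨hp0, hp1⟩, hmin⟩ :=
      Rat.AbsoluteValue.exists_minimal_nat_zero_lt_and_lt_one hnt bdd
    have hp := Rat.AbsoluteValue.is_prime_of_minimal_nat_zero_lt_and_lt_one hp0 hp1 hmin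
    obtain ⟨t, ht, hpt⟩ := Rat.AbsoluteValue.exists_pos_eq_pow_neg hp0 hp1 hmin
    refine ⟨t, fun n hn => ?_⟩
    obtain ⟨v, m, hpm, rfl⟩ := Nat.exists_eq_pow_mul_and_not_dvd hn p hp.ne_one
    have hm := Rat.AbsoluteValue.eq_one_of_not_dvd bdd hp0 hp1 hmin hpm
    rw [← hf, Nat.cast_mul, map_mul, Nat.cast_pow, map_pow, hm, hpt, mul_one]
    calc ((p ^ (-t) : ℝ) ^ v)⁻¹ = ((p ^ v : ℕ) : ℝ) ^ t := by
          rw [Real.rpow_pow_comm (Nat.cast_nonneg p), Real.rpow_neg (by positivity), inv_inv,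
            Nat.cast_pow]
      _ ≤ ((p ^ v * m : ℕ) : ℝ) ^ t := by
          gcongr
          exact Nat.le_mul_of_pos_right _ (Nat.pos_of_ne_zero (by rintro rfl; simp at hn))
  · refine ⟨0, fun n hn => ?_⟩
    have hfn : f n = 1 := by
      by_contra h
      exact hnt ⟨n, by exact_mod_cast hn, h⟩
    simp [← hf, hfn]

theorem exists_norm_natCast_inv_le_pow :
    ∃ k : ℕ, ∀ n : ℕ, n ≠ 0 → ‖(n : K)‖⁻¹ ≤ (n : ℝ) ^ k := by
  obtain ⟨t, ht⟩ := exists_norm_natCast_inv_le_rpow K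
  refine ⟨⌈t⌉₊, fun n hn => (ht n hn).trans ?_⟩
  rw [← Real.rpow_natCast]
  exact Real.rpow_le_rpow_of_exponent_le (Nat.one_le_cast.2 (Nat.pos_of_ne_zero hn))
    (Nat.le_ceil t)

end NormNatCast

section FormalIntegration

variable {K : Type*} [NormedField K] [IsUltrametricDist K] [CharZero K]

theorem tendsto_norm_div_natCast_mul_pow {c : ℕ → K} {r s : ℝ} (hs : 0 ≤ s) (hsr : s < r)
    (hc : Tendsto (fun n => ‖c n‖ * r ^ n) atTop (𝓝 0)) :
    Tendsto (fun n : ℕ => ‖c n / n‖ * s ^ n) atTop (𝓝 0) := by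
  obtain ⟨k, hk⟩ := exists_norm_natCast_inv_le_pow K
  have hr : 0 < r := hs.trans_lt hsr
  have hpoly : Tendsto (fun n : ℕ => (n : ℝ) ^ k * (s / r) ^ n) atTop (𝓝 0) :=
    tendsto_pow_const_mul_const_pow_of_abs_lt_one k
      (by rw [abs_of_nonneg (by positivity)]; exact (div_lt_one hr).2 hsr)
  refine squeeze_zero' (Eventually.of_forall fun n => by positivity) ?_
    (by simpa using hc.mul hpoly)
  filter_upwards [eventually_ne_atTop 0] with n hn
  calc ‖c n / n‖ * s ^ n = ‖c n‖ * ‖(n : K)‖⁻¹ * s ^ n := by rw [norm_div, div_eq_mul_inv]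
    _ ≤ ‖c n‖ * (n : ℝ) ^ k * s ^ n := by gcongr; exact hk n hn
    _ = ‖c n‖ * r ^ n * ((n : ℝ) ^ k * (s / r) ^ n) := by
        rw [div_pow]
        field_simp

theorem tendsto_norm_div_intCast_mul_zpow_atTop {c : ℤ → K} {r s : ℝ} (hs : 0 ≤ s)
    (hsr : s < r) (hc : Tendsto (fun n => ‖c n‖ * r ^ n) atTop (𝓝 0)) :
    Tendsto (fun n : ℤ => ‖c n / n‖ * s ^ n) atTop (𝓝 0) := by
  rw [← Nat.map_cast_int_atTop, tendsto_map'_iff, Function.comp_def] at hc ⊢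
  exact (tendsto_norm_div_natCast_mul_pow hs hsr (c := fun n : ℕ => c n)
    (by simpa using hc)).congr fun n => by simp

theorem tendsto_norm_div_intCast_mul_zpow_atBot {c : ℤ → K} {r s : ℝ} (hr : 0 < r)
    (hrs : r < s) (hc : Tendsto (fun n => ‖c n‖ * r ^ n) atBot (𝓝 0)) :
    Tendsto (fun n : ℤ => ‖c n / n‖ * s ^ n) atBot (𝓝 0) := by
  rw [← tendsto_comp_neg_atTop_iff] at hc ⊢
  simpa using tendsto_norm_div_intCast_mul_zpow_atTop (c := fun n => c (-n))
    (inv_pos.2 (hr.trans hrs)).le (inv_strictAnti₀ hr hrs) (by simpa using hc)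

end FormalIntegration

theorem laurent_formal_integration_overconvergent_general
    {K : Type*} [NormedField K] [IsUltrametricDist K] [CharZero K]
    (γ' γ δ δ' : ℝ) (h₁ : 0 < γ') (h₂ : γ' < γ) (h₃ : γ ≤ δ)
    (a : ℤ → K)
    (haTop : Tendsto (fun n : ℤ => ‖a n‖ * δ' ^ n) atTop (𝓝 0))
    (haBot : Tendsto (fun n : ℤ => ‖a n‖ * γ' ^ n) atBot (𝓝 0))
    (b : ℤ → K) (hb : ∀ n : ℤ, b n = if n = 0 then 0 else a n / ((n : ℤ) : K))
    (γ'' δ'' : ℝ) (hγ''₁ : γ' < γ'') (hδ''₁ : δ < δ'') (hδ''₂ : δ'' < δ') :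
    Tendsto (fun n : ℤ => ‖b n‖ * δ'' ^ n) atTop (𝓝 0) ∧
      Tendsto (fun n : ℤ => ‖b n‖ * γ'' ^ n) atBot (𝓝 0) := by
  -- `a 0 / 0 = 0`, so the case split in `hb` is only cosmetic.
  have hb' : b = fun n => a n / n := funext fun n => by
    rw [hb]
    split_ifs with hn <;> simp [hn]
  subst hb'
  have hδ'' : 0 ≤ δ'' := ((h₁.trans h₂).trans_le h₃).trans hδ''₁ |>.le
  exact ⟨tendsto_norm_div_intCast_mul_zpow_atTop hδ'' hδ''₂ haTop,
    tendsto_norm_div_intCast_mul_zpow_atBot h₁ hγ''₁ haBot⟩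

/-- **Two-sided formal integration preserves overconvergence on annuli** (step (i) in the proof of
Lemma 2.1 of the paper): if the Laurent coefficients `a : ℤ → K` satisfy
`‖a n‖ * δ'^n → 0` as `n → +∞` and `‖a n‖ * γ'^n → 0` as `n → −∞` (overconvergent decay for the
annulus `γ ≤ |T| ≤ δ`, where `0 < γ' < γ ≤ δ < δ'`), and `b n = a n / n` for `n ≠ 0`, `b 0 = 0`,
then for all `γ' < γ'' < γ` and `δ < δ'' < δ'` one has `‖b n‖ * δ''^n → 0` as `n → +∞` and
`‖b n‖ * γ''^n → 0` as `n → −∞`. -/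
theorem laurent_formal_integration_overconvergent
    {K : Type*} [NormedField K] [IsUltrametricDist K] [CharZero K]
    (γ' γ δ δ' : ℝ) (h₁ : 0 < γ') (h₂ : γ' < γ) (h₃ : γ ≤ δ) (h₄ : δ < δ')
    (a : ℤ → K)
    (haTop : Tendsto (fun n : ℤ => ‖a n‖ * δ' ^ n) atTop (𝓝 0))
    (haBot : Tendsto (fun n : ℤ => ‖a n‖ * γ' ^ n) atBot (𝓝 0))
    (b : ℤ → K) (hb : ∀ n : ℤ, b n = if n = 0 then 0 else a n / ((n : ℤ) : K))
    (γ'' δ'' : ℝ) (hγ''₁ : γ' < γ'') (hγ''₂ : γ'' < γ) (hδ''₁ : δ < δ'') (hδ''₂ : δ'' < δ') :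
    Tendsto (fun n : ℤ => ‖b n‖ * δ'' ^ n) atTop (𝓝 0) ∧
      Tendsto (fun n : ℤ => ‖b n‖ * γ'' ^ n) atBot (𝓝 0) :=
  laurent_formal_integration_overconvergent_general γ' γ δ δ' h₁ h₂ h₃ a haTop haBot b hb γ'' δ''
    hγ''₁ hδ''₁ hδ''₂
end

section
/- Fix reals 0 < γ < δ and let V = {a : ℤ → K | for all reals s, t with γ < s ≤ t < δ, ‖a n‖ · t^n → 0 as n → +∞ and ‖a n‖ · s^n → 0 as n → −∞}, the coefficient model of the ring of rigid-analytic functions on the open annulus γ < |T| < δ. Then the formal derivative D maps V into V, an element a ∈ V lies in the range of D : V → V if and only if a(−1) = 0, and the quotient K-vector space V ⧸ range(D) is one-dimensional, spanned by the class of the indicator sequence of −1 (the class of dT/T). (This is the n = r = 1 case of the paper's Lemma 2.1(b).) -/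
open Filter Topology

/-- The coefficient model of the ring of rigid-analytic functions on the open annulus
`γ < |T| < δ`: two-sided sequences `a : ℤ → K` such that for all radii `γ < s ≤ t < δ` one has
`‖a n‖ * t^n → 0` as `n → +∞` and `‖a n‖ * s^n → 0` as `n → −∞`.  It is a `K`-submodule of
`ℤ → K`. -/
def OpenAnnulus (K : Type*) [NormedField K] (γ δ : ℝ) (hγ : 0 < γ) :
    Submodule K (ℤ → K) where
  carrier := {a | ∀ s t : ℝ, γ < s → s ≤ t → t < δ →
    Tendsto (fun n : ℤ => ‖a n‖ * t ^ n) atTop (𝓝 0) ∧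
    Tendsto (fun n : ℤ => ‖a n‖ * s ^ n) atBot (𝓝 0)}
  zero_mem' := by
    intro s t hs hst htδ
    constructor <;> simp
  add_mem' := by
    intro a b ha hb s t hs hst htδ
    have hs0 : 0 < s := hγ.trans hs
    have ht0 : 0 < t := hs0.trans_le hst
    obtain ⟨haT, haB⟩ := ha s t hs hst htδ
    obtain ⟨hbT, hbB⟩ := hb s t hs hst htδ
    constructor
    · refine squeeze_zero
        (fun n => mul_nonneg (norm_nonneg _) (zpow_nonneg ht0.le n))
        (fun n => ?_) (by simpa using haT.add hbT)
      have h3 : ‖(a + b) n‖ * t ^ n ≤ (‖a n‖ + ‖b n‖) * t ^ n :=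
        mul_le_mul_of_nonneg_right (norm_add_le _ _) (zpow_nonneg ht0.le n)
      simpa [add_mul] using h3
    · refine squeeze_zero
        (fun n => mul_nonneg (norm_nonneg _) (zpow_nonneg hs0.le n))
        (fun n => ?_) (by simpa using haB.add hbB)
      have h3 : ‖(a + b) n‖ * s ^ n ≤ (‖a n‖ + ‖b n‖) * s ^ n :=
        mul_le_mul_of_nonneg_right (norm_add_le _ _) (zpow_nonneg hs0.le n)
      simpa [add_mul] using h3
  smul_mem' := by
    intro c a ha s t hs hst htδ
    obtain ⟨haT, haB⟩ := ha s t hs hst htδ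
    exact ⟨by simpa [norm_mul, mul_assoc] using haT.const_mul ‖c‖,
      by simpa [norm_mul, mul_assoc] using haB.const_mul ‖c‖⟩

/-- The formal derivative operator `f ↦ df/dT` on two-sided (Laurent) coefficient sequences:
`(D a) n = (n + 1) * a (n + 1)`. -/
def DerZ (K : Type*) [NormedField K] : (ℤ → K) →ₗ[K] (ℤ → K) where
  toFun a := fun n => ((n + 1 : ℤ) : K) * a (n + 1)
  map_add' a b := by funext n; simp [mul_add]
  map_smul' c a := by
    funext n
    simp only [Pi.smul_apply, smul_eq_mul, RingHom.id_apply]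
    ring

/-! The residue `a (-1)` vanishes on the range of `D`, because `D` multiplies it by `0`.
Conversely, termwise integration `b n = a (n - 1) / n` inverts `D` on sequences with zero residue,
and `b` stays in the annulus: by Ostrowski, an ultrametric norm on `ℚ` is trivial or equivalent to a
`p`-adic one, so `‖1 / n‖ ≤ |n| ^ c` grows only polynomially, and polynomial growth (as well as the
index shift) is absorbed by comparing with a slightly larger radius at `+∞` and a slightly smaller
one at `-∞`. Hence the residue is a linear functional on `V` with kernel `range D`, equal to `1`
on `dT/T`. -/

theorem tendsto_natAbs_rpow_mul_zpow_atTop (c : ℝ) {q : ℝ} (hq0 : 0 < q) (hq1 : q < 1) :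
    Tendsto (fun n : ℤ => (n.natAbs : ℝ) ^ c * q ^ n) atTop (𝓝 0) := by
  have hlog : 0 < -Real.log q := neg_pos.2 (Real.log_neg hq0 hq1)
  refine ((tendsto_rpow_mul_exp_neg_mul_atTop_nhds_zero c _ hlog).comp
    tendsto_intCast_atTop_atTop).congr' ?_
  filter_upwards [eventually_ge_atTop 0] with n hn
  rw [Function.comp_apply, neg_neg, Nat.cast_natAbs, Int.cast_abs,
    abs_of_nonneg (by exact_mod_cast hn), ← Real.rpow_intCast, Real.rpow_def_of_pos hq0]

theorem tendsto_natAbs_rpow_mul_zpow_atBot (c : ℝ) {q : ℝ} (hq : 1 < q) :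
    Tendsto (fun n : ℤ => (n.natAbs : ℝ) ^ c * q ^ n) atBot (𝓝 0) := by
  refine ((tendsto_natAbs_rpow_mul_zpow_atTop c (inv_pos.2 (zero_lt_one.trans hq))
    (inv_lt_one_of_one_lt₀ hq)).comp tendsto_neg_atBot_atTop).congr fun n => ?_
  rw [Function.comp_apply, Int.natAbs_neg, inv_zpow, zpow_neg, inv_inv]

theorem tendsto_natAbs_rpow_mul_comp_add_mul_zpow {l : Filter ℤ} {u : ℤ → ℝ} {c r r' : ℝ}
    (k : ℤ) (hr' : r' ≠ 0) (hk : Tendsto (· + k) l l)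
    (hu : Tendsto (fun n => u n * r' ^ n) l (𝓝 0))
    (hw : Tendsto (fun n : ℤ => (n.natAbs : ℝ) ^ c * (r / r') ^ n) l (𝓝 0)) :
    Tendsto (fun n : ℤ => (n.natAbs : ℝ) ^ c * u (n + k) * r ^ n) l (𝓝 0) := by
  have h := ((hu.comp hk).mul hw).mul_const (r' ^ (-k))
  rw [zero_mul, zero_mul] at h
  refine h.congr fun n => ?_
  rw [Function.comp_apply, div_zpow, zpow_add₀ hr', zpow_neg]
  field_simp

theorem exists_rpow_neg_le_norm_natCast (K : Type*) [NormedField K] [IsUltrametricDist K]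
    [CharZero K] : ∃ c : ℝ, ∀ n : ℕ, n ≠ 0 → (n : ℝ) ^ (-c) ≤ ‖(n : K)‖ := by
  let f : AbsoluteValue ℚ ℝ := (NormedField.toAbsoluteValue K).comp (Rat.castHom K).injective
  have hf (n : ℕ) : f n = ‖(n : K)‖ := by
    simp [f, AbsoluteValue.comp, NormedField.toAbsoluteValue]
  have bdd (n : ℕ) : f n ≤ 1 := hf n ▸ IsUltrametricDist.norm_natCast_le_one K n
  by_cases hnt : f.IsNontrivial
  · obtain ⟨p, ⟨hp0, hp1⟩, hmin⟩ :=
      Rat.AbsoluteValue.exists_minimal_nat_zero_lt_and_lt_one hnt bdd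
    have hp := Rat.AbsoluteValue.is_prime_of_minimal_nat_zero_lt_and_lt_one hp0 hp1 hmin
    obtain ⟨t, ht, hpt⟩ := Rat.AbsoluteValue.exists_pos_eq_pow_neg hp0 hp1 hmin
    refine ⟨t, fun n hn => ?_⟩
    obtain ⟨v, m, hpm, rfl⟩ := Nat.exists_eq_pow_mul_and_not_dvd hn p hp.ne_one
    have hm := Rat.AbsoluteValue.eq_one_of_not_dvd bdd hp0 hp1 hmin hpm
    rw [hf] at hpt hm
    have hm0 : m ≠ 0 := by rintro rfl; simp at hn
    calc ((p ^ v * m : ℕ) : ℝ) ^ (-t) ≤ ((p ^ v : ℕ) : ℝ) ^ (-t) := by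
          refine Real.rpow_le_rpow_of_nonpos (mod_cast pow_pos hp.pos v) ?_ (by linarith)
          exact_mod_cast Nat.le_mul_of_pos_right _ (Nat.pos_of_ne_zero hm0)
      _ = ‖((p ^ v * m : ℕ) : K)‖ := by
          rw [Nat.cast_mul, norm_mul, hm, mul_one, Nat.cast_pow, Nat.cast_pow, norm_pow, hpt,
            ← Real.rpow_natCast, ← Real.rpow_mul (Nat.cast_nonneg _), mul_comm,
            Real.rpow_mul (Nat.cast_nonneg _), Real.rpow_natCast]
  · exact ⟨0, fun n hn => by
      simp [← hf, AbsoluteValue.not_isNontrivial_apply hnt (Nat.cast_ne_zero.2 hn)]⟩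

section Functional

variable {R V : Type*} [Ring R] [AddCommGroup V] [Module R V] (φ : V →ₗ[R] R) {e : V}

theorem Submodule.span_singleton_mk_eq_top_of_apply_eq_one (he : φ e = 1) :
    Submodule.span R {(Submodule.Quotient.mk e : V ⧸ LinearMap.ker φ)} = ⊤ := by
  refine Submodule.eq_top_iff'.2 fun x => ?_
  obtain ⟨y, rfl⟩ := Submodule.Quotient.mk_surjective _ x
  refine Submodule.mem_span_singleton.2 ⟨φ y, ?_⟩
  rw [← Submodule.Quotient.mk_smul, Submodule.Quotient.eq, LinearMap.mem_ker]
  simp [he]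

theorem Module.finrank_quotient_ker_eq_one [StrongRankCondition R] (he : φ e = 1) :
    Module.finrank R (V ⧸ LinearMap.ker φ) = 1 :=
  (φ.quotKerEquivOfSurjective fun c => ⟨c • e, by simp [he]⟩).finrank_eq.trans
    (Module.finrank_self R)

end Functional

section OpenAnnulus

variable {K : Type*} [NormedField K] {γ δ : ℝ} {hγ : 0 < γ}

theorem mem_openAnnulus_iff {a : ℤ → K} : a ∈ OpenAnnulus K γ δ hγ ↔
    ∀ r, γ < r → r < δ → Tendsto (fun n : ℤ => ‖a n‖ * r ^ n) atTop (𝓝 0) ∧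
      Tendsto (fun n : ℤ => ‖a n‖ * r ^ n) atBot (𝓝 0) :=
  ⟨fun ha r hγr hrδ => ha r r hγr le_rfl hrδ, fun ha s t hγs hst htδ =>
    ⟨(ha t (hγs.trans_le hst) htδ).1, (ha s hγs (hst.trans_lt htδ)).2⟩⟩

theorem mem_openAnnulus_of_finite_support {a : ℤ → K} (ha : (Function.support a).Finite) :
    a ∈ OpenAnnulus K γ δ hγ := by
  have ha' : ∀ᶠ n in atBot ⊔ atTop, a n = 0 := Int.cofinite_eq ▸ eventually_cofinite.2 ha
  rw [eventually_sup] at ha'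
  refine mem_openAnnulus_iff.2 fun r _ _ =>
    ⟨tendsto_const_nhds.congr' ?_, tendsto_const_nhds.congr' ?_⟩
  · filter_upwards [ha'.2] with n hn
    simp [hn]
  · filter_upwards [ha'.1] with n hn
    simp [hn]

theorem mem_openAnnulus_of_norm_le {a b : ℤ → K} (ha : a ∈ OpenAnnulus K γ δ hγ) (c : ℝ)
    (k : ℤ) (hb : ∀ n, ‖b n‖ ≤ (n.natAbs : ℝ) ^ c * ‖a (n + k)‖) :
    b ∈ OpenAnnulus K γ δ hγ := by
  rw [mem_openAnnulus_iff] at ha ⊢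
  intro r hγr hrδ
  have hr : 0 < r := hγ.trans hγr
  have hnonneg (n : ℤ) : 0 ≤ ‖b n‖ * r ^ n := by positivity
  have hle (n : ℤ) : ‖b n‖ * r ^ n ≤ (n.natAbs : ℝ) ^ c * ‖a (n + k)‖ * r ^ n := by
    gcongr
    exact hb n
  constructor
  · obtain ⟨r', hrr', hr'δ⟩ := exists_between hrδ
    have hr' : 0 < r' := hr.trans hrr'
    exact squeeze_zero hnonneg hle <| tendsto_natAbs_rpow_mul_comp_add_mul_zpow k hr'.ne'
      (tendsto_atTop_add_const_right _ k tendsto_id) (ha r' (hγr.trans hrr') hr'δ).1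
      (tendsto_natAbs_rpow_mul_zpow_atTop c (div_pos hr hr') ((div_lt_one hr').2 hrr'))
  · obtain ⟨r', hγr', hr'r⟩ := exists_between hγr
    have hr' : 0 < r' := hγ.trans hγr'
    exact squeeze_zero hnonneg hle <| tendsto_natAbs_rpow_mul_comp_add_mul_zpow k hr'.ne'
      (tendsto_atBot_add_const_right _ k tendsto_id) (ha r' hγr' (hr'r.trans hrδ)).2
      (tendsto_natAbs_rpow_mul_zpow_atBot c ((one_lt_div hr').2 hr'r))

theorem derZ_apply (a : ℤ → K) (n : ℤ) : DerZ K a n = ((n + 1 : ℤ) : K) * a (n + 1) := rfl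

theorem derZ_apply_neg_one (a : ℤ → K) : DerZ K a (-1) = 0 := by
  simp [derZ_apply]

theorem derZ_mem_openAnnulus [IsUltrametricDist K] {a : ℤ → K}
    (ha : a ∈ OpenAnnulus K γ δ hγ) : DerZ K a ∈ OpenAnnulus K γ δ hγ :=
  mem_openAnnulus_of_norm_le ha 0 1 fun n => by
    rw [derZ_apply, norm_mul, Real.rpow_zero]
    exact mul_le_mul_of_nonneg_right (IsUltrametricDist.norm_intCast_le_one K _) (norm_nonneg _)

/-- The junk value `(0 : K)⁻¹ = 0` makes the coefficient of `T ^ 0` vanish. -/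
def antiderivZ (K : Type*) [NormedField K] (a : ℤ → K) : ℤ → K :=
  fun n => (n : K)⁻¹ * a (n - 1)

theorem derZ_antiderivZ [CharZero K] {a : ℤ → K} (ha : a (-1) = 0) :
    DerZ K (antiderivZ K a) = a := by
  funext n
  rw [derZ_apply, antiderivZ, add_sub_cancel_right, ← mul_assoc]
  rcases eq_or_ne (n + 1) 0 with hn | hn
  · rw [show n = -1 by omega, ha, mul_zero]
  · rw [mul_inv_cancel₀ (Int.cast_ne_zero.2 hn), one_mul]

theorem antiderivZ_mem_openAnnulus [IsUltrametricDist K] [CharZero K] {a : ℤ → K}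
    (ha : a ∈ OpenAnnulus K γ δ hγ) : antiderivZ K a ∈ OpenAnnulus K γ δ hγ := by
  obtain ⟨c, hc⟩ := exists_rpow_neg_le_norm_natCast K
  refine mem_openAnnulus_of_norm_le ha c (-1) fun n => ?_
  rw [antiderivZ, norm_mul, norm_inv, ← sub_eq_add_neg]
  gcongr
  rcases eq_or_ne n 0 with rfl | hn
  · simpa using Real.rpow_nonneg le_rfl c
  · have hn' : n.natAbs ≠ 0 := Int.natAbs_ne_zero.2 hn
    rw [← norm_natAbs, inv_le_comm₀ (norm_pos_iff.2 (Nat.cast_ne_zero.2 hn')) (by positivity),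
      ← Real.rpow_neg (Nat.cast_nonneg _)]
    exact hc _ hn'

variable (K γ δ hγ) in
def OpenAnnulus.residue : OpenAnnulus K γ δ hγ →ₗ[K] K :=
  (LinearMap.proj (-1)).comp (OpenAnnulus K γ δ hγ).subtype

end OpenAnnulus

theorem openAnnulus_deRham_general
    (K : Type*) [NormedField K] [IsUltrametricDist K] [CharZero K]
    (γ δ : ℝ) (hγ : 0 < γ) :
    (∀ a ∈ OpenAnnulus K γ δ hγ, DerZ K a ∈ OpenAnnulus K γ δ hγ) ∧
    (∀ a ∈ OpenAnnulus K γ δ hγ,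
      ((∃ b ∈ OpenAnnulus K γ δ hγ, DerZ K b = a) ↔ a (-1) = 0)) ∧
    ∃ he : (fun n : ℤ => if n = -1 then (1 : K) else 0) ∈ OpenAnnulus K γ δ hγ,
      Submodule.span K
          {(Submodule.Quotient.mk ⟨fun n : ℤ => if n = -1 then (1 : K) else 0, he⟩ :
            OpenAnnulus K γ δ hγ ⧸
              Submodule.comap (OpenAnnulus K γ δ hγ).subtype
                (Submodule.map (DerZ K) (OpenAnnulus K γ δ hγ)))} = ⊤ ∧
      Module.finrank K
          (OpenAnnulus K γ δ hγ ⧸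
            Submodule.comap (OpenAnnulus K γ δ hγ).subtype
              (Submodule.map (DerZ K) (OpenAnnulus K γ δ hγ))) = 1 := by
  have hrange : ∀ a ∈ OpenAnnulus K γ δ hγ,
      (∃ b ∈ OpenAnnulus K γ δ hγ, DerZ K b = a) ↔ a (-1) = 0 := fun a ha =>
    ⟨fun ⟨b, _, hb⟩ => hb ▸ derZ_apply_neg_one b,
      fun h => ⟨antiderivZ K a, antiderivZ_mem_openAnnulus ha, derZ_antiderivZ h⟩⟩
  have hker : Submodule.comap (OpenAnnulus K γ δ hγ).subtype
      (Submodule.map (DerZ K) (OpenAnnulus K γ δ hγ)) =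
        LinearMap.ker (OpenAnnulus.residue K γ δ hγ) := by
    ext x
    simpa [OpenAnnulus.residue] using hrange x x.2
  have he : (fun n : ℤ => if n = -1 then (1 : K) else 0) ∈ OpenAnnulus K γ δ hγ :=
    mem_openAnnulus_of_finite_support <|
      (Set.finite_singleton (-1 : ℤ)).subset fun n hn => by_contra fun h => hn (if_neg h)
  have he1 : OpenAnnulus.residue K γ δ hγ ⟨_, he⟩ = 1 := by
    simp [OpenAnnulus.residue]
  refine ⟨fun a ha => derZ_mem_openAnnulus ha, hrange, he, ?_⟩
  rw [hker]
  exact ⟨Submodule.span_singleton_mk_eq_top_of_apply_eq_one _ he1,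
    Module.finrank_quotient_ker_eq_one _ he1⟩

/-- **`H¹_dR` of the open rigid annulus is one-dimensional, spanned by `dT/T`** (the `n = r = 1`
case of Lemma 2.1(b) of the paper): the formal derivative `D` maps the ring `V` of rigid-analytic
functions on the open annulus `γ < |T| < δ` into itself, an element `a ∈ V` is in the range of
`D : V → V` if and only if its residue coefficient `a (-1)` vanishes, and the quotient
`V ⧸ range D` is a one-dimensional `K`-vector space spanned by the class of the indicator
sequence of `-1` (the class of the differential `dT/T`). -/
theorem openAnnulus_deRham
    (K : Type*) [NormedField K] [IsUltrametricDist K] [CharZero K]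
    (γ δ : ℝ) (hγ : 0 < γ) (hγδ : γ < δ) :
    (∀ a ∈ OpenAnnulus K γ δ hγ, DerZ K a ∈ OpenAnnulus K γ δ hγ) ∧
    (∀ a ∈ OpenAnnulus K γ δ hγ,
      ((∃ b ∈ OpenAnnulus K γ δ hγ, DerZ K b = a) ↔ a (-1) = 0)) ∧
    ∃ he : (fun n : ℤ => if n = -1 then (1 : K) else 0) ∈ OpenAnnulus K γ δ hγ,
      Submodule.span K
          {(Submodule.Quotient.mk ⟨fun n : ℤ => if n = -1 then (1 : K) else 0, he⟩ :
            OpenAnnulus K γ δ hγ ⧸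
              Submodule.comap (OpenAnnulus K γ δ hγ).subtype
                (Submodule.map (DerZ K) (OpenAnnulus K γ δ hγ)))} = ⊤ ∧
      Module.finrank K
          (OpenAnnulus K γ δ hγ ⧸
            Submodule.comap (OpenAnnulus K γ δ hγ).subtype
              (Submodule.map (DerZ K) (OpenAnnulus K γ δ hγ))) = 1 :=
  openAnnulus_deRham_general K γ δ hγ
end
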